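/- arXiv:1512.04569 — 6 statements merged into one kernel-verified Lean document; each statement's English description precedes it below -/
import Mathlib

section
/- Let V be a finite-dimensional real inner product space with inner product a, let P : V → V be a-self-adjoint and positive definite, and let P₀ be an a-orthogonal projection. Define the hybrid operator P_hyb = P₀ + (I−P₀)P(I−P₀). Then the minimal eigenvalue of P_hyb (with respect to a) is at least min(1, λ_min(P)) where λ_min(P) is the minimal eigenvalue of P, and in particular if λ_min(P) ≤ 1 then λ_min(P_hyb) ≥ λ_min(P). -/
/-!
Write `u = P₀ u + w` with `w = u - P₀ u`. Since `P₀` is an `a`-orthogonal projection the two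
pieces are `a`-orthogonal, so `a u u = a (P₀ u) (P₀ u) + a w w`, while the hybrid operator gives
`a (P_hyb u) u = a (P₀ u) (P₀ u) + a (P w) w ≥ a (P₀ u) (P₀ u) + λ_min a w w`. Both summands are
nonnegative, so the Rayleigh quotient of `P_hyb` is at least `min 1 λ_min`.
-/

section

variable {R M : Type*} [CommRing R] [AddCommGroup M] [Module R M]

def hybridOperator (Q T : Module.End R M) : Module.End R M :=
  Q + (1 - Q) * T * (1 - Q)

theorem hybridOperator_apply (Q T : Module.End R M) (u : M) :
    hybridOperator Q T u = Q u + (T (u - Q u) - Q (T (u - Q u))) := by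
  simp [hybridOperator, Module.End.mul_apply]

open LinearMap (BilinForm)

namespace LinearMap.BilinForm

variable {B : BilinForm R M} {Q : Module.End R M}

theorem apply_proj_proj (hQ : IsIdempotentElem Q) (hQB : B.IsAdjointPair B Q Q) (u : M) :
    B (Q u) (Q u) = B (Q u) u := by
  rw [← hQB, ← Module.End.mul_apply, hQ.eq]

theorem apply_sub_proj_proj (hQ : IsIdempotentElem Q) (hQB : B.IsAdjointPair B Q Q) (u : M) :
    B (u - Q u) (Q u) = 0 := by
  rw [← hQB, map_sub, ← Module.End.mul_apply, hQ.eq, sub_self, map_zero, LinearMap.zero_apply]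

theorem apply_self_eq_proj_add_sub_proj (hQ : IsIdempotentElem Q)
    (hQB : B.IsAdjointPair B Q Q) (u : M) :
    B u u = B (Q u) (Q u) + B (u - Q u) (u - Q u) := by
  have horth := apply_sub_proj_proj hQ hQB u
  rw [map_sub, LinearMap.sub_apply] at horth
  rw [map_sub, map_sub, LinearMap.sub_apply, LinearMap.sub_apply]
  linear_combination horth - apply_proj_proj hQ hQB u

theorem hybridOperator_apply_self (hQ : IsIdempotentElem Q) (hQB : B.IsAdjointPair B Q Q)
    (T : Module.End R M) (u : M) :
    B (hybridOperator Q T u) u = B (Q u) (Q u) + B (T (u - Q u)) (u - Q u) := by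
  rw [hybridOperator_apply, map_add, LinearMap.add_apply, map_sub, LinearMap.sub_apply,
    hQB (T _), apply_proj_proj hQ hQB, ← map_sub]

theorem min_one_mul_le_hybridOperator_apply_self {V : Type*} [AddCommGroup V]
    [Module ℝ V] {B : BilinForm ℝ V} (hB : ∀ x, 0 ≤ B x x) {Q : Module.End ℝ V}
    (hQ : IsIdempotentElem Q) (hQB : B.IsAdjointPair B Q Q) {T : Module.End ℝ V} {c : ℝ}
    (hT : ∀ u, c * B u u ≤ B (T u) u) (u : V) :
    min 1 c * B u u ≤ B (hybridOperator Q T u) u := by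
  rw [hybridOperator_apply_self hQ hQB, apply_self_eq_proj_add_sub_proj hQ hQB, mul_add]
  gcongr
  · exact mul_le_of_le_one_left (hB _) (min_le_left _ _)
  · exact (mul_le_mul_of_nonneg_right (min_le_right _ _) (hB _)).trans (hT _)

end LinearMap.BilinForm

end

theorem stmt_1_general {V : Type*} [AddCommGroup V] [Module ℝ V]
    (a : V → V → ℝ)
    (ha_add : ∀ x y z, a (x + y) z = a x z + a y z)
    (ha_smul : ∀ (c : ℝ) (x y : V), a (c • x) y = c * a x y)
    (ha_symm : ∀ x y, a x y = a y x)
    (ha_pos : ∀ x, x ≠ 0 → 0 < a x x)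
    (P P₀ : V →ₗ[ℝ] V)
    (hproj : ∀ u, P₀ (P₀ u) = P₀ u)
    (hP₀sa : ∀ u v, a (P₀ u) v = a u (P₀ v))
    (lam_min : ℝ)
    (hlam : ∀ u, lam_min * a u u ≤ a (P u) u) :
    (∀ u : V, min 1 lam_min * a u u ≤ a (P₀ u + (P (u - P₀ u) - P₀ (P (u - P₀ u)))) u) ∧
    (lam_min ≤ 1 →
      ∀ u : V, lam_min * a u u ≤ a (P₀ u + (P (u - P₀ u) - P₀ (P (u - P₀ u)))) u) := by
  let B : LinearMap.BilinForm ℝ V := LinearMap.mk₂ ℝ a ha_add ha_smul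
    (fun x y z => by rw [ha_symm, ha_add, ha_symm y, ha_symm z])
    (fun c x y => by rw [ha_symm, ha_smul, ha_symm y, smul_eq_mul])
  have hB : ∀ x, 0 ≤ B x x := fun x => by
    rcases eq_or_ne x 0 with rfl | hx
    · simp
    · exact (ha_pos x hx).le
  have hQ : IsIdempotentElem P₀ := LinearMap.ext hproj
  have hmin : ∀ u : V, min 1 lam_min * a u u ≤ a (P₀ u + (P (u - P₀ u) - P₀ (P (u - P₀ u)))) u :=
    fun u => by
      simpa only [B, LinearMap.mk₂_apply, hybridOperator_apply] using
        B.min_one_mul_le_hybridOperator_apply_self hB hQ hP₀sa hlam u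
  refine ⟨hmin, fun hle u => ?_⟩
  simpa only [min_eq_right hle] using hmin u

theorem stmt_1 {V : Type*} [AddCommGroup V] [Module ℝ V] [FiniteDimensional ℝ V]
    (a : V → V → ℝ)
    (ha_add : ∀ x y z, a (x + y) z = a x z + a y z)
    (ha_smul : ∀ (c : ℝ) (x y : V), a (c • x) y = c * a x y)
    (ha_symm : ∀ x y, a x y = a y x)
    (ha_pos : ∀ x, x ≠ 0 → 0 < a x x)
    (P P₀ : V →ₗ[ℝ] V)
    (hPsa : ∀ u v, a (P u) v = a u (P v))
    (hPpos : ∀ u, u ≠ 0 → 0 < a (P u) u)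
    (hproj : ∀ u, P₀ (P₀ u) = P₀ u)
    (hP₀sa : ∀ u v, a (P₀ u) v = a u (P₀ v))
    (lam_min : ℝ)
    (hlam : ∀ u, lam_min * a u u ≤ a (P u) u) :
    (∀ u : V, min 1 lam_min * a u u ≤ a (P₀ u + (P (u - P₀ u) - P₀ (P (u - P₀ u)))) u) ∧
    (lam_min ≤ 1 →
      ∀ u : V, lam_min * a u u ≤ a (P₀ u + (P (u - P₀ u) - P₀ (P (u - P₀ u)))) u) :=
  stmt_1_general a ha_add ha_smul ha_symm ha_pos P P₀ hproj hP₀sa lam_min hlam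
end

section
/- Let V be a finite-dimensional real inner product space with inner product a, let P : V → V be a-self-adjoint with λ_max(P) ≥ 1, and let P₀ be an a-orthogonal projection. Define P_hyb = P₀ + (I−P₀)P(I−P₀). Then λ_max(P_hyb) ≤ λ_max(P). -/
/-!
Split `u = P₀ u + w` with `w = u - P₀ u`. The two pieces are `a`-orthogonal, so `a(u,u)` is the
sum of their squares, and the cross terms also drop out of
`a(P_hyb u, u) = a(P₀ u, P₀ u) + a(P w, w)`. The second summand is at most `λ a(w,w)` and,
because `λ ≥ 1`, the first is at most `λ a(P₀ u, P₀ u)`.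
-/

namespace LinearMap.BilinForm

variable {R M : Type*} [CommRing R] [AddCommGroup M] [Module R M]

def hybrid (P₀ T : M →ₗ[R] M) : M →ₗ[R] M :=
  P₀ + (1 - P₀) ∘ₗ T ∘ₗ (1 - P₀)

theorem hybrid_apply (P₀ T : M →ₗ[R] M) (u : M) :
    hybrid P₀ T u = P₀ u + (T (u - P₀ u) - P₀ (T (u - P₀ u))) := by
  simp [hybrid]

variable {B : LinearMap.BilinForm R M} {P₀ : M →ₗ[R] M}

theorem _root_.IsIdempotentElem.apply_sub_self (hidem : IsIdempotentElem P₀) (u : M) :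
    P₀ (u - P₀ u) = 0 := by
  rw [map_sub, ← Module.End.mul_apply, hidem.eq, sub_self]

theorem apply_proj_sub_proj (hidem : IsIdempotentElem P₀) (hsa : IsAdjointPair B B P₀ P₀)
    (u v : M) : B (P₀ u) (v - P₀ v) = 0 := by
  rw [hsa, hidem.apply_sub_self, map_zero]

theorem apply_sub_proj_proj_s2 (hidem : IsIdempotentElem P₀) (hsa : IsAdjointPair B B P₀ P₀)
    (u v : M) : B (u - P₀ u) (P₀ v) = 0 := by
  rw [← hsa, hidem.apply_sub_self, map_zero, LinearMap.zero_apply]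

theorem apply_self_eq_add (hidem : IsIdempotentElem P₀) (hsa : IsAdjointPair B B P₀ P₀)
    (u : M) : B u u = B (P₀ u) (P₀ u) + B (u - P₀ u) (u - P₀ u) := by
  conv_lhs => rw [← add_sub_cancel (P₀ u) u]
  simp only [map_add, LinearMap.add_apply, apply_proj_sub_proj hidem hsa,
    apply_sub_proj_proj_s2 hidem hsa, add_zero, zero_add]

theorem hybrid_apply_self (hidem : IsIdempotentElem P₀) (hsa : IsAdjointPair B B P₀ P₀)
    (T : M →ₗ[R] M) (u : M) :
    B (hybrid P₀ T u) u = B (P₀ u) (P₀ u) + B (T (u - P₀ u)) (u - P₀ u) := by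
  have hproj : B (P₀ u) u = B (P₀ u) (P₀ u) := by
    rw [← sub_eq_zero, ← map_sub, apply_proj_sub_proj hidem hsa]
  have hcompl : B (T (u - P₀ u) - P₀ (T (u - P₀ u))) u = B (T (u - P₀ u)) (u - P₀ u) := by
    rw [map_sub, LinearMap.sub_apply, hsa, ← map_sub]
  rw [hybrid_apply, map_add, LinearMap.add_apply, hproj, hcompl]

theorem hybrid_apply_self_le [LinearOrder R] [IsStrictOrderedRing R] {T : M →ₗ[R] M}
    (hB : ∀ x, 0 ≤ B x x) (hidem : IsIdempotentElem P₀) (hsa : IsAdjointPair B B P₀ P₀)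
    {c : R} (hc : 1 ≤ c) (hT : ∀ u, B (T u) u ≤ c * B u u) (u : M) :
    B (hybrid P₀ T u) u ≤ c * B u u := by
  calc B (hybrid P₀ T u) u
      = B (P₀ u) (P₀ u) + B (T (u - P₀ u)) (u - P₀ u) := hybrid_apply_self hidem hsa T u
    _ ≤ c * B (P₀ u) (P₀ u) + c * B (u - P₀ u) (u - P₀ u) :=
        add_le_add (le_mul_of_one_le_left (hB _) hc) (hT _)
    _ = c * B u u := by rw [apply_self_eq_add hidem hsa u, mul_add]

end LinearMap.BilinForm

theorem stmt_2_general {V : Type*} [AddCommGroup V] [Module ℝ V]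
    (a : V → V → ℝ)
    (ha_add : ∀ x y z, a (x + y) z = a x z + a y z)
    (ha_smul : ∀ (c : ℝ) (x y : V), a (c • x) y = c * a x y)
    (ha_symm : ∀ x y, a x y = a y x)
    (ha_pos : ∀ x, x ≠ 0 → 0 < a x x)
    (P P₀ : V →ₗ[ℝ] V)
    (hproj : ∀ u, P₀ (P₀ u) = P₀ u)
    (hP₀sa : ∀ u v, a (P₀ u) v = a u (P₀ v))
    (lam_max : ℝ) (hlam1 : 1 ≤ lam_max)
    (hlam : ∀ u, a (P u) u ≤ lam_max * a u u) :
    ∀ u : V, a (P₀ u + (P (u - P₀ u) - P₀ (P (u - P₀ u)))) u ≤ lam_max * a u u := by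
  let B : LinearMap.BilinForm ℝ V := LinearMap.mk₂ ℝ a ha_add ha_smul
    (fun x y z => by rw [ha_symm, ha_add, ha_symm y, ha_symm z])
    (fun c x y => by rw [ha_symm, ha_smul, ha_symm, smul_eq_mul])
  have hB : ∀ x, 0 ≤ B x x := by
    intro x
    rcases eq_or_ne x 0 with rfl | hx
    · simp
    · exact (ha_pos x hx).le
  intro u
  rw [← LinearMap.BilinForm.hybrid_apply]
  exact LinearMap.BilinForm.hybrid_apply_self_le (B := B) hB (LinearMap.ext hproj) hP₀sa hlam1
    hlam u

theorem stmt_2 {V : Type*} [AddCommGroup V] [Module ℝ V] [FiniteDimensional ℝ V]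
    (a : V → V → ℝ)
    (ha_add : ∀ x y z, a (x + y) z = a x z + a y z)
    (ha_smul : ∀ (c : ℝ) (x y : V), a (c • x) y = c * a x y)
    (ha_symm : ∀ x y, a x y = a y x)
    (ha_pos : ∀ x, x ≠ 0 → 0 < a x x)
    (P P₀ : V →ₗ[ℝ] V)
    (hPsa : ∀ u v, a (P u) v = a u (P v))
    (hproj : ∀ u, P₀ (P₀ u) = P₀ u)
    (hP₀sa : ∀ u v, a (P₀ u) v = a u (P₀ v))
    (lam_max : ℝ) (hlam1 : 1 ≤ lam_max)
    (hlam : ∀ u, a (P u) u ≤ lam_max * a u u) :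
    ∀ u : V, a (P₀ u + (P (u - P₀ u) - P₀ (P (u - P₀ u)))) u ≤ lam_max * a u u :=
  stmt_2_general a ha_add ha_smul ha_symm ha_pos P P₀ hproj hP₀sa lam_max hlam1 hlam
end

section
/- Let V be a finite-dimensional real inner product space with inner product a, and let P₁,…,P_N be a-orthogonal projections onto subspaces V₁,…,V_N whose sum is V. Define P_AS = Σᵢ Pᵢ. Suppose there exists C₀ > 0 such that for every u ∈ V there is a decomposition u = Σᵢ uᵢ with uᵢ ∈ Vᵢ and Σᵢ a(uᵢ,uᵢ) ≤ C₀² a(u,u). Then λ_min(P_AS) ≥ C₀^{-2}, i.e., a(P_AS u, u) ≥ C₀^{-2} a(u,u) for all u ∈ V. -/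
/-!
Write `u = ∑ wᵢ` with `wᵢ ∈ Vᵢ`. Since `Pᵢ` is the `a`-orthogonal projection onto `Vᵢ`,
`a(u, u) = ∑ a(Pᵢ u, wᵢ)` and `a(P_AS u, u) = ∑ a(Pᵢ u, Pᵢ u)`. Bounding each term by
`2 t a(x, y) ≤ t² a(x, x) + a(y, y)` with `t = C₀²` and using the stability of the decomposition gives
`2 C₀² a(u, u) ≤ C₀⁴ a(P_AS u, u) + C₀² a(u, u)`.
-/

open Finset

namespace LinearMap.BilinForm

variable {R M ι : Type*} [AddCommGroup M] [Fintype ι]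

section CommRing

variable [CommRing R] [Module R M] {B : LinearMap.BilinForm R M} {W : ι → Submodule R M}
  {P : ι → M → M}

theorem apply_sum_proj_eq_sum (hB : B.IsSymm) (hrange : ∀ i u, P i u ∈ W i)
    (hproj : ∀ i u, ∀ v ∈ W i, B (P i u) v = B u v) (u : M) :
    B (∑ i, P i u) u = ∑ i, B (P i u) (P i u) := by
  rw [map_sum, LinearMap.sum_apply]
  refine sum_congr rfl fun i _ => ?_
  rw [hproj i u _ (hrange i u), hB.eq]

theorem apply_self_eq_sum_proj (hproj : ∀ i u, ∀ v ∈ W i, B (P i u) v = B u v)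
    {w : ι → M} (hw : ∀ i, w i ∈ W i) :
    B (∑ i, w i) (∑ i, w i) = ∑ i, B (P i (∑ j, w j)) (w i) := by
  rw [map_sum]
  exact sum_congr rfl fun i _ => (hproj i _ _ (hw i)).symm

end CommRing

section LinearOrderedCommRing

variable [CommRing R] [LinearOrder R] [IsStrictOrderedRing R] [Module R M]
  {B : LinearMap.BilinForm R M}

theorem IsPosSemidef.two_mul_mul_apply_le (hB : B.IsPosSemidef) (t : R) (x y : M) :
    2 * t * B x y ≤ t ^ 2 * B x x + B y y := by
  have h := hB.nonneg (t • x - y)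
  simp only [map_sub, map_smul, LinearMap.sub_apply, LinearMap.smul_apply, smul_eq_mul,
    hB.eq y x] at h
  linarith

end LinearOrderedCommRing

variable [Field R] [LinearOrder R] [IsStrictOrderedRing R] [Module R M]
  {B : LinearMap.BilinForm R M} {W : ι → Submodule R M} {P : ι → M → M}

theorem IsPosSemidef.inv_sq_mul_le_apply_sum_proj (hB : B.IsPosSemidef)
    (hrange : ∀ i u, P i u ∈ W i) (hproj : ∀ i u, ∀ v ∈ W i, B (P i u) v = B u v)
    {C : R} (hC : 0 < C) {u : M} {w : ι → M} (hw : ∀ i, w i ∈ W i) (hu : u = ∑ i, w i)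
    (hstable : ∑ i, B (w i) (w i) ≤ C ^ 2 * B u u) :
    (C ^ 2)⁻¹ * B u u ≤ B (∑ i, P i u) u := by
  have hsum : B (∑ i, P i u) u = ∑ i, B (P i u) (P i u) :=
    apply_sum_proj_eq_sum hB.isSymm hrange hproj u
  have hself : B u u = ∑ i, B (P i u) (w i) := hu ▸ apply_self_eq_sum_proj hproj hw
  have key : 2 * C ^ 2 * B u u ≤ (C ^ 2) ^ 2 * B (∑ i, P i u) u + C ^ 2 * B u u :=
    calc 2 * C ^ 2 * B u u = ∑ i, 2 * C ^ 2 * B (P i u) (w i) := by rw [hself, mul_sum]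
      _ ≤ ∑ i, ((C ^ 2) ^ 2 * B (P i u) (P i u) + B (w i) (w i)) :=
        sum_le_sum fun i _ => hB.two_mul_mul_apply_le _ _ _
      _ ≤ (C ^ 2) ^ 2 * B (∑ i, P i u) u + C ^ 2 * B u u := by
        rw [sum_add_distrib, ← mul_sum, hsum]
        gcongr
  have hC2 : 0 < C ^ 2 := by positivity
  rw [inv_mul_le_iff₀ hC2]
  exact le_of_mul_le_mul_left (by linarith) hC2

end LinearMap.BilinForm

theorem stmt_4_general {V : Type*} [AddCommGroup V] [Module ℝ V]
    (a : V → V → ℝ)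
    (ha_add : ∀ x y z, a (x + y) z = a x z + a y z)
    (ha_smul : ∀ (c : ℝ) (x y : V), a (c • x) y = c * a x y)
    (ha_symm : ∀ x y, a x y = a y x)
    (ha_pos : ∀ x, x ≠ 0 → 0 < a x x)
    (N : ℕ) (Vi : Fin N → Submodule ℝ V) (P : Fin N → V →ₗ[ℝ] V)
    (hrange : ∀ i u, P i u ∈ Vi i)
    (hproj : ∀ i u, ∀ v ∈ Vi i, a (P i u) v = a u v)
    (C₀ : ℝ) (hC₀ : 0 < C₀)
    (hstable : ∀ u : V, ∃ w : Fin N → V, (∀ i, w i ∈ Vi i) ∧ u = ∑ i, w i ∧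
      ∑ i, a (w i) (w i) ≤ C₀ ^ 2 * a u u) :
    ∀ u : V, (C₀ ^ 2)⁻¹ * a u u ≤ a (∑ i, P i u) u := by
  let B : LinearMap.BilinForm ℝ V := LinearMap.mk₂ ℝ a ha_add ha_smul
    (fun x y z => by rw [ha_symm, ha_add, ha_symm y, ha_symm z])
    (fun c x y => by rw [ha_symm, ha_smul, ha_symm, smul_eq_mul])
  have hB : B.IsPosSemidef := by
    refine ⟨⟨ha_symm⟩, ⟨fun x => ?_⟩⟩
    obtain rfl | hx := eq_or_ne x 0
    · exact (B.map_zero₂ 0).ge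
    · exact (ha_pos x hx).le
  intro u
  obtain ⟨w, hw, hu, hwu⟩ := hstable u
  exact hB.inv_sq_mul_le_apply_sum_proj (P := fun i => P i) hrange hproj hC₀ hw hu hwu

theorem stmt_4 {V : Type*} [AddCommGroup V] [Module ℝ V] [FiniteDimensional ℝ V]
    (a : V → V → ℝ)
    (ha_add : ∀ x y z, a (x + y) z = a x z + a y z)
    (ha_smul : ∀ (c : ℝ) (x y : V), a (c • x) y = c * a x y)
    (ha_symm : ∀ x y, a x y = a y x)
    (ha_pos : ∀ x, x ≠ 0 → 0 < a x x)
    (N : ℕ) (Vi : Fin N → Submodule ℝ V) (P : Fin N → V →ₗ[ℝ] V)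
    (hrange : ∀ i u, P i u ∈ Vi i)
    (hproj : ∀ i u, ∀ v ∈ Vi i, a (P i u) v = a u v)
    (hspan : (⨆ i, Vi i) = ⊤)
    (C₀ : ℝ) (hC₀ : 0 < C₀)
    (hstable : ∀ u : V, ∃ w : Fin N → V, (∀ i, w i ∈ Vi i) ∧ u = ∑ i, w i ∧
      ∑ i, a (w i) (w i) ≤ C₀ ^ 2 * a u u) :
    ∀ u : V, (C₀ ^ 2)⁻¹ * a u u ≤ a (∑ i, P i u) u :=
  stmt_4_general a ha_add ha_smul ha_symm ha_pos N Vi P hrange hproj C₀ hC₀ hstable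
end

section
/- Let V be a finite-dimensional real inner product space with inner product a, and let P₁,…,P_N be a-orthogonal projections. Suppose each element of V lies in the span of at most N_c of the subspaces in the sense that the subspaces can be colored with N_c colors so that projections of the same color have mutually a-orthogonal ranges. Then λ_max(Σᵢ Pᵢ) ≤ N_c. -/
/-! For a positive semidefinite symmetric form `B`, a vector `w` with `B w w = B w u` satisfies
`B w u ≤ B u u`, since `0 ≤ B (u - w) (u - w) = B u u - B w u`. The projections of `u` of one
colour have mutually orthogonal ranges, so their sum `w` is again such a vector; summing over
the colours bounds `B (∑ i, P i u) u` by `N_c · B u u`. -/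

namespace LinearMap.BilinForm

variable {R M ι κ : Type*}

section Orthogonal

variable [CommSemiring R] [AddCommMonoid M] [Module R M] {B : LinearMap.BilinForm R M}

lemma apply_sum_self_eq_of_pairwise_eq_zero {s : Finset ι} {p : ι → M} {u : M}
    (hp : ∀ i ∈ s, B (p i) (p i) = B (p i) u)
    (horth : (s : Set ι).Pairwise fun i j ↦ B (p i) (p j) = 0) :
    B (∑ i ∈ s, p i) (∑ i ∈ s, p i) = B (∑ i ∈ s, p i) u := by
  rw [sum_left, sum_left]
  refine Finset.sum_congr rfl fun i hi ↦ ?_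
  rw [sum_right, Finset.sum_eq_single_of_mem i hi fun j hj hji ↦ horth hi hj hji.symm, hp i hi]

end Orthogonal

section PosSemidef

variable [CommRing R] [LinearOrder R] [IsStrictOrderedRing R] [AddCommGroup M] [Module R M]
  {B : LinearMap.BilinForm R M}

lemma IsPosSemidef.apply_le_of_apply_self_eq (hB : B.IsPosSemidef) {u w : M}
    (hw : B w w = B w u) : B w u ≤ B u u := by
  have hnonneg := hB.isNonneg.nonneg (u - w)
  simp only [map_sub, LinearMap.sub_apply, hB.isSymm.eq u w, hw] at hnonneg
  linarith

lemma IsPosSemidef.apply_sum_le_card_mul [Fintype ι] [Fintype κ] (hB : B.IsPosSemidef)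
    {p : ι → M} {u : M} (color : ι → κ) (hp : ∀ i, B (p i) (p i) = B (p i) u)
    (horth : ∀ i j, i ≠ j → color i = color j → B (p i) (p j) = 0) :
    B (∑ i, p i) u ≤ Fintype.card κ * B u u := by
  classical
  calc B (∑ i, p i) u
      = ∑ c, B (∑ i with color i = c, p i) u := by
        rw [← Finset.sum_fiberwise Finset.univ color p, sum_left]
    _ ≤ ∑ _c : κ, B u u := Finset.sum_le_sum fun c _ ↦ by
        refine hB.apply_le_of_apply_self_eq (apply_sum_self_eq_of_pairwise_eq_zero
          (fun i _ ↦ hp i) fun i hi j hj hij ↦ horth i j hij ?_)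
        rw [(Finset.mem_filter.1 hi).2, (Finset.mem_filter.1 hj).2]
    _ = Fintype.card κ * B u u := by
        rw [Finset.sum_const, Finset.card_univ, nsmul_eq_mul]

end PosSemidef

end LinearMap.BilinForm

theorem stmt_5_general {V : Type*} [AddCommGroup V] [Module ℝ V]
    (a : V → V → ℝ)
    (ha_add : ∀ x y z, a (x + y) z = a x z + a y z)
    (ha_smul : ∀ (c : ℝ) (x y : V), a (c • x) y = c * a x y)
    (ha_symm : ∀ x y, a x y = a y x)
    (ha_pos : ∀ x, x ≠ 0 → 0 < a x x)
    (N Nc : ℕ) (Vi : Fin N → Submodule ℝ V) (P : Fin N → V →ₗ[ℝ] V)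
    (hrange : ∀ i u, P i u ∈ Vi i)
    (hproj : ∀ i u, ∀ v ∈ Vi i, a (P i u) v = a u v)
    (color : Fin N → Fin Nc)
    (hcolor : ∀ i j, i ≠ j → color i = color j →
      ∀ u ∈ Vi i, ∀ v ∈ Vi j, a u v = 0) :
    ∀ u : V, a (∑ i, P i u) u ≤ (Nc : ℝ) * a u u := by
  intro u
  let B : LinearMap.BilinForm ℝ V := LinearMap.mk₂ ℝ a ha_add ha_smul
    (fun x y z ↦ by rw [ha_symm, ha_add, ha_symm y, ha_symm z])
    (fun c x y ↦ by rw [ha_symm, ha_smul, ha_symm, smul_eq_mul])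
  have hB : B.IsPosSemidef :=
    { isSymm := ⟨ha_symm⟩
      isNonneg := ⟨fun x ↦ by
        obtain rfl | hx := eq_or_ne x 0
        · exact (B.zero_left 0).ge
        · exact (ha_pos x hx).le⟩ }
  have hbound := hB.apply_sum_le_card_mul color
    (fun i ↦ (hproj i u _ (hrange i u)).trans (ha_symm _ _))
    (fun i j hij hc ↦ hcolor i j hij hc _ (hrange i u) _ (hrange j u))
  rwa [Fintype.card_fin] at hbound

theorem stmt_5 {V : Type*} [AddCommGroup V] [Module ℝ V] [FiniteDimensional ℝ V]
    (a : V → V → ℝ)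
    (ha_add : ∀ x y z, a (x + y) z = a x z + a y z)
    (ha_smul : ∀ (c : ℝ) (x y : V), a (c • x) y = c * a x y)
    (ha_symm : ∀ x y, a x y = a y x)
    (ha_pos : ∀ x, x ≠ 0 → 0 < a x x)
    (N Nc : ℕ) (Vi : Fin N → Submodule ℝ V) (P : Fin N → V →ₗ[ℝ] V)
    (hrange : ∀ i u, P i u ∈ Vi i)
    (hproj : ∀ i u, ∀ v ∈ Vi i, a (P i u) v = a u v)
    (color : Fin N → Fin Nc)
    (hcolor : ∀ i j, i ≠ j → color i = color j →
      ∀ u ∈ Vi i, ∀ v ∈ Vi j, a u v = 0) :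
    ∀ u : V, a (∑ i, P i u) u ≤ (Nc : ℝ) * a u u :=
  stmt_5_general a ha_add ha_smul ha_symm ha_pos N Nc Vi P hrange hproj color hcolor
end

section
/- Let V be a finite-dimensional real inner product space with inner product a. Suppose P₁,…,P_N are a-orthogonal projections such that the additive operator P_AS = Σᵢ Pᵢ satisfies the lower bound a(P_AS u, u) ≥ C₀^{-2} a(u,u) for all u. Then the multiplicative error propagation operator E = (I−P_N)⋯(I−P₁) satisfies ‖E‖_a² ≤ 1 − 1/((2N²+1)C₀²) < 1; in particular ‖E‖_a < 1, so the multiplicative Schwarz iteration converges. -/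
/-!
Let `v₀ = u` and `v_{k+1} = (I - P_k) v_k`, so that `E u = v_N`. Each step is an orthogonal
projection onto `ker P_k`, so Pythagoras gives `‖u‖² - ‖E u‖² = ∑ₖ ‖P_k v_k‖²`. On the other
hand `u = v_i + ∑_{k<i} P_k v_k` and `‖P_i‖ ≤ 1`, hence `‖P_i u‖ ≤ ∑_{k≤i} ‖P_k v_k‖`; by
Cauchy–Schwarz `∑ᵢ ‖P_i u‖² ≤ N² (‖u‖² - ‖E u‖²)`. The lower bound on `P_AS` turns this into
`‖u‖² ≤ N² C₀² (‖u‖² - ‖E u‖²)`, which is a contraction estimate for `E`.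
-/

open Finset
open scoped RealInnerProductSpace

/-- The error propagation operator `(1 - Q (n-1)) ⋯ (1 - Q 0)` of multiplicative Schwarz. -/
def multSchwarzError {R : Type*} [Ring R] (Q : ℕ → R) (n : ℕ) : R :=
  (List.ofFn fun i : Fin n => 1 - Q i).reverse.prod

section Ring

variable {R : Type*} [Ring R] (Q : ℕ → R)

@[simp]
theorem multSchwarzError_zero : multSchwarzError Q 0 = 1 := rfl

theorem multSchwarzError_succ (n : ℕ) :
    multSchwarzError Q (n + 1) = (1 - Q n) * multSchwarzError Q n := by
  simp only [multSchwarzError, List.ofFn_succ', List.concat_eq_append, List.reverse_append,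
    List.reverse_cons, List.reverse_nil, List.nil_append, List.singleton_append, List.prod_cons,
    Fin.val_castSucc, Fin.val_last]

end Ring

section Module

variable {R M : Type*} [Ring R] [AddCommGroup M] [Module R M] (Q : ℕ → Module.End R M)

theorem sub_multSchwarzError_apply (u : M) (n : ℕ) :
    u - multSchwarzError Q n u = ∑ k ∈ range n, Q k (multSchwarzError Q k u) := by
  induction n with
  | zero => simp
  | succ n ih =>
    rw [multSchwarzError_succ, sum_range_succ, ← ih]
    simp only [Module.End.mul_apply, LinearMap.sub_apply, Module.End.one_apply]
    abel

end Module

namespace LinearMap.IsSymmetricProjection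

variable {E : Type*} [SeminormedAddCommGroup E] [InnerProductSpace ℝ E] {p : E →ₗ[ℝ] E}

theorem inner_map_self_eq_norm_sq (hp : p.IsSymmetricProjection) (x : E) :
    ⟪p x, x⟫ = ‖p x‖ ^ 2 := by
  conv_lhs => rw [← hp.isIdempotentElem.eq, Module.End.mul_apply, hp.isSymmetric]
  exact real_inner_self_eq_norm_sq _

theorem norm_sub_map_sq (hp : p.IsSymmetricProjection) (x : E) :
    ‖x - p x‖ ^ 2 = ‖x‖ ^ 2 - ‖p x‖ ^ 2 := by
  rw [norm_sub_sq_real, real_inner_comm, hp.inner_map_self_eq_norm_sq]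
  ring

theorem norm_map_le (hp : p.IsSymmetricProjection) (x : E) : ‖p x‖ ≤ ‖x‖ := by
  have h := hp.norm_sub_map_sq x
  exact (pow_le_pow_iff_left₀ (norm_nonneg _) (norm_nonneg _) two_ne_zero).1
    (by linarith [sq_nonneg ‖x - p x‖])

end LinearMap.IsSymmetricProjection

theorem LinearMap.isSymmetricProjection_zero {E : Type*} [SeminormedAddCommGroup E]
    [InnerProductSpace ℝ E] : (0 : E →ₗ[ℝ] E).IsSymmetricProjection :=
  ⟨IsIdempotentElem.zero, LinearMap.IsSymmetric.zero⟩

section InnerProductSpace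

variable {E : Type*} [SeminormedAddCommGroup E] [InnerProductSpace ℝ E]
  {Q : ℕ → E →ₗ[ℝ] E} (hQ : ∀ k, (Q k).IsSymmetricProjection)
include hQ

theorem norm_multSchwarzError_apply_sq (u : E) (n : ℕ) :
    ‖multSchwarzError Q n u‖ ^ 2 =
      ‖u‖ ^ 2 - ∑ k ∈ range n, ‖Q k (multSchwarzError Q k u)‖ ^ 2 := by
  induction n with
  | zero => simp
  | succ n ih =>
    rw [multSchwarzError_succ, Module.End.mul_apply, LinearMap.sub_apply,
      Module.End.one_apply, (hQ n).norm_sub_map_sq, ih, sum_range_succ]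
    ring

theorem norm_multSchwarzError_apply_le (u : E) (n : ℕ) :
    ‖multSchwarzError Q n u‖ ≤ ‖u‖ := by
  have h := norm_multSchwarzError_apply_sq hQ u n
  have : 0 ≤ ∑ k ∈ range n, ‖Q k (multSchwarzError Q k u)‖ ^ 2 := by positivity
  exact (pow_le_pow_iff_left₀ (norm_nonneg _) (norm_nonneg _) two_ne_zero).1 (by linarith)

theorem norm_map_le_sum_norm_map_multSchwarzError (u : E) (i : ℕ) :
    ‖Q i u‖ ≤ ∑ k ∈ range (i + 1), ‖Q k (multSchwarzError Q k u)‖ := by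
  have hu : u = multSchwarzError Q i u + ∑ k ∈ range i, Q k (multSchwarzError Q k u) := by
    rw [← sub_multSchwarzError_apply]; abel
  have hQu : Q i u = Q i (multSchwarzError Q i u) +
      ∑ k ∈ range i, Q i (Q k (multSchwarzError Q k u)) := by
    conv_lhs => rw [hu]
    rw [map_add, map_sum]
  calc ‖Q i u‖
      ≤ ‖Q i (multSchwarzError Q i u)‖ + ∑ k ∈ range i, ‖Q i (Q k (multSchwarzError Q k u))‖ := by
        rw [hQu]
        exact (norm_add_le _ _).trans (by gcongr; exact norm_sum_le _ _)
    _ ≤ ‖Q i (multSchwarzError Q i u)‖ + ∑ k ∈ range i, ‖Q k (multSchwarzError Q k u)‖ := by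
        gcongr; exact (hQ i).norm_map_le _
    _ = ∑ k ∈ range (i + 1), ‖Q k (multSchwarzError Q k u)‖ := by
        rw [sum_range_succ, add_comm]

theorem sum_norm_map_sq_le (u : E) (n : ℕ) :
    ∑ i ∈ range n, ‖Q i u‖ ^ 2 ≤ n ^ 2 * (‖u‖ ^ 2 - ‖multSchwarzError Q n u‖ ^ 2) := by
  set b : ℕ → ℝ := fun k => ‖Q k (multSchwarzError Q k u)‖
  have hb : ∀ i ∈ range n, ‖Q i u‖ ≤ ∑ k ∈ range n, b k := fun i hi =>
    (norm_map_le_sum_norm_map_multSchwarzError hQ u i).trans <|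
      sum_le_sum_of_subset_of_nonneg (range_subset_range.2 (mem_range.1 hi))
        fun k _ _ => norm_nonneg _
  calc ∑ i ∈ range n, ‖Q i u‖ ^ 2
      ≤ ∑ _i ∈ range n, (∑ k ∈ range n, b k) ^ 2 := by
        gcongr with i hi; exact hb i hi
    _ ≤ n * (n * ∑ k ∈ range n, b k ^ 2) := by
        rw [sum_const, card_range, nsmul_eq_mul]
        gcongr
        simpa using sq_sum_le_card_mul_sum_sq (s := range n) (f := b)
    _ = n ^ 2 * (‖u‖ ^ 2 - ‖multSchwarzError Q n u‖ ^ 2) := by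
        rw [norm_multSchwarzError_apply_sq hQ]
        ring

theorem norm_sq_le_mul_sub_norm_multSchwarzError_apply_sq {C : ℝ} (hC : 0 < C) (u : E) (n : ℕ)
    (hlow : C⁻¹ * ‖u‖ ^ 2 ≤ ∑ i ∈ range n, ‖Q i u‖ ^ 2) :
    ‖u‖ ^ 2 ≤ n ^ 2 * C * (‖u‖ ^ 2 - ‖multSchwarzError Q n u‖ ^ 2) := by
  have h := (inv_mul_le_iff₀ hC).1 (hlow.trans (sum_norm_map_sq_le hQ u n))
  linarith

end InnerProductSpace

abbrev innerProductCoreOfForm {V : Type*} [AddCommGroup V] [Module ℝ V] (a : V → V → ℝ)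
    (ha_add : ∀ x y z, a (x + y) z = a x z + a y z)
    (ha_smul : ∀ (c : ℝ) (x y : V), a (c • x) y = c * a x y)
    (ha_symm : ∀ x y, a x y = a y x)
    (ha_pos : ∀ x, x ≠ 0 → 0 < a x x) : InnerProductSpace.Core ℝ V where
  inner := a
  conj_inner_symm x y := by simpa using ha_symm y x
  re_inner_nonneg x := by
    rcases eq_or_ne x 0 with rfl | hx
    · simpa using (ha_smul 0 0 0).ge
    · exact (ha_pos x hx).le
  add_left := ha_add
  smul_left x y r := by simpa using ha_smul r x y
  definite x hx := by_contra fun h => (ha_pos x h).ne' hx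

theorem stmt_14_general {V : Type*} [AddCommGroup V] [Module ℝ V]
    (a : V → V → ℝ)
    (ha_add : ∀ x y z, a (x + y) z = a x z + a y z)
    (ha_smul : ∀ (c : ℝ) (x y : V), a (c • x) y = c * a x y)
    (ha_symm : ∀ x y, a x y = a y x)
    (ha_pos : ∀ x, x ≠ 0 → 0 < a x x)
    (N : ℕ) (P : Fin N → Module.End ℝ V)
    (hproj : ∀ i, P i * P i = P i)
    (hsa : ∀ i (u v : V), a (P i u) v = a u (P i v))
    (C₀ : ℝ) (hC₀ : 0 < C₀)
    (hlow : ∀ u : V, (C₀ ^ 2)⁻¹ * a u u ≤ a (∑ i, P i u) u) :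
    (1 - 1 / ((2 * (N : ℝ) ^ 2 + 1) * C₀ ^ 2) < 1) ∧
    ∀ u : V,
      a (((List.ofFn fun i => (1 : Module.End ℝ V) - P i).reverse.prod) u)
        (((List.ofFn fun i => (1 : Module.End ℝ V) - P i).reverse.prod) u) ≤
      (1 - 1 / ((2 * (N : ℝ) ^ 2 + 1) * C₀ ^ 2)) * a u u := by
  let cd := innerProductCoreOfForm a ha_add ha_smul ha_symm ha_pos
  let _ : NormedAddCommGroup V := cd.toNormedAddCommGroup
  let _ : InnerProductSpace ℝ V := InnerProductSpace.ofCore cd.toCore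
  have hC : 0 < (2 * (N : ℝ) ^ 2 + 1) * C₀ ^ 2 := by positivity
  refine ⟨by linarith [one_div_pos.2 hC], fun u => ?_⟩
  -- extending by `0` keeps every `Q k` an orthogonal projection
  set Q : ℕ → Module.End ℝ V := fun k => if h : k < N then P ⟨k, h⟩ else 0
  have hQP (i : Fin N) : Q i = P i := dif_pos i.isLt
  have hQ (k : ℕ) : (Q k).IsSymmetricProjection := by
    by_cases h : k < N
    · simpa [Q, h] using (⟨hproj _, hsa _⟩ : (P ⟨k, h⟩).IsSymmetricProjection)
    · simpa [Q, h] using LinearMap.isSymmetricProjection_zero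
  have hE : (List.ofFn fun i => (1 : Module.End ℝ V) - P i).reverse.prod =
      multSchwarzError Q N := by
    simp only [multSchwarzError, hQP]
  have hlow' : (C₀ ^ 2)⁻¹ * ‖u‖ ^ 2 ≤ ∑ i ∈ range N, ‖Q i u‖ ^ 2 := by
    have h : (C₀ ^ 2)⁻¹ * ‖u‖ ^ 2 ≤ ∑ i, ⟪P i u, u⟫ := by
      rw [← real_inner_self_eq_norm_sq, ← sum_inner]; exact hlow u
    simpa only [← hQP, (hQ _).inner_map_self_eq_norm_sq,
      Fin.sum_univ_eq_sum_range (fun k => ‖Q k u‖ ^ 2)] using h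
  have hgap := norm_sq_le_mul_sub_norm_multSchwarzError_apply_sq hQ (by positivity) u N hlow'
  have hEu := pow_le_pow_left₀ (norm_nonneg _) (norm_multSchwarzError_apply_le hQ u N) 2
  rw [hE]
  change inner ℝ (multSchwarzError Q N u) (multSchwarzError Q N u) ≤ _ * inner ℝ u u
  rw [real_inner_self_eq_norm_sq, real_inner_self_eq_norm_sq, sub_mul, one_mul, le_sub_comm,
    one_div_mul_eq_div, div_le_iff₀ hC]
  nlinarith [sq_nonneg C₀, mul_nonneg (sq_nonneg C₀) (sub_nonneg.2 hEu)]

theorem stmt_14 {V : Type*} [AddCommGroup V] [Module ℝ V] [FiniteDimensional ℝ V]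
    (a : V → V → ℝ)
    (ha_add : ∀ x y z, a (x + y) z = a x z + a y z)
    (ha_smul : ∀ (c : ℝ) (x y : V), a (c • x) y = c * a x y)
    (ha_symm : ∀ x y, a x y = a y x)
    (ha_pos : ∀ x, x ≠ 0 → 0 < a x x)
    (N : ℕ) (hN : 0 < N) (P : Fin N → Module.End ℝ V)
    (hproj : ∀ i, P i * P i = P i)
    (hsa : ∀ i (u v : V), a (P i u) v = a u (P i v))
    (C₀ : ℝ) (hC₀ : 0 < C₀)
    (hlow : ∀ u : V, (C₀ ^ 2)⁻¹ * a u u ≤ a (∑ i, P i u) u) :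
    (1 - 1 / ((2 * (N : ℝ) ^ 2 + 1) * C₀ ^ 2) < 1) ∧
    ∀ u : V,
      a (((List.ofFn fun i => (1 : Module.End ℝ V) - P i).reverse.prod) u)
        (((List.ofFn fun i => (1 : Module.End ℝ V) - P i).reverse.prod) u) ≤
      (1 - 1 / ((2 * (N : ℝ) ^ 2 + 1) * C₀ ^ 2)) * a u u :=
  stmt_14_general a ha_add ha_smul ha_symm ha_pos N P hproj hsa C₀ hC₀ hlow
end

section
/- Let V be a finite-dimensional real inner product space with inner product a, let V₀ ⊆ V be a subspace with a-orthogonal projection P₀ onto V₀, and let P be a-self-adjoint positive definite with eigenvalues in [λ_min, λ_max] where λ_min ≤ 1 ≤ λ_max. Then every eigenvalue of the hybrid operator P_hyb = P₀ + (I−P₀)P(I−P₀) lies in [λ_min, λ_max]; hence κ(P_hyb) ≤ κ(P) = λ_max/λ_min. -/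
/-! The hybrid operator is `P₀ + (I - P₀) P (I - P₀)`. Splitting `u = P₀ u + w` with `w = u - P₀ u`
a-orthogonal to `V₀`, its energy is `a(P₀u, P₀u) + a(Pw, w)` while `a(u, u) = a(P₀u, P₀u) + a(w, w)`:
on `V₀` it acts as the identity, on the complement as `P`, so its Rayleigh quotient lies between
`min 1 λ_min` and `max 1 λ_max`. -/

theorem proj_self_left {V : Type*} {a : V → V → ℝ} {S : Set V} {P₀ : V → V}
    (ha_symm : ∀ x y, a x y = a y x) (hrange : ∀ u, P₀ u ∈ S)
    (horth : ∀ u, ∀ v ∈ S, a (P₀ u) v = a u v) (u : V) : a (P₀ u) u = a (P₀ u) (P₀ u) := by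
  rw [ha_symm, horth u _ (hrange u)]

section

variable {V : Type*} [AddCommGroup V] {a : V → V → ℝ}

theorem zero_left_of_add_left (ha_add : ∀ x y z, a (x + y) z = a x z + a y z) (z : V) :
    a 0 z = 0 :=
  (AddMonoidHom.mk' (a · z) (ha_add · · z)).map_zero

theorem sub_left_of_add_left (ha_add : ∀ x y z, a (x + y) z = a x z + a y z) (x y z : V) :
    a (x - y) z = a x z - a y z :=
  (AddMonoidHom.mk' (a · z) (ha_add · · z)).map_sub x y

theorem add_right_of_add_left (ha_add : ∀ x y z, a (x + y) z = a x z + a y z)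
    (ha_symm : ∀ x y, a x y = a y x) (x y z : V) : a x (y + z) = a x y + a x z := by
  rw [ha_symm, ha_add, ha_symm y, ha_symm z]

theorem self_nonneg_of_pos (ha_add : ∀ x y z, a (x + y) z = a x z + a y z)
    (ha_pos : ∀ x, x ≠ 0 → 0 < a x x) (x : V) : 0 ≤ a x x := by
  rcases eq_or_ne x 0 with rfl | hx
  · exact (zero_left_of_add_left ha_add 0).ge
  · exact (ha_pos x hx).le

variable {S : Set V} {P₀ : V → V}

theorem sub_proj_orthogonal (ha_add : ∀ x y z, a (x + y) z = a x z + a y z)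
    (horth : ∀ u, ∀ v ∈ S, a (P₀ u) v = a u v) (u : V) {v : V} (hv : v ∈ S) :
    a (u - P₀ u) v = 0 := by
  rw [sub_left_of_add_left ha_add, horth u v hv, sub_self]

theorem self_eq_proj_add_sub_proj (ha_add : ∀ x y z, a (x + y) z = a x z + a y z)
    (ha_symm : ∀ x y, a x y = a y x) (hrange : ∀ u, P₀ u ∈ S)
    (horth : ∀ u, ∀ v ∈ S, a (P₀ u) v = a u v) (u : V) :
    a u u = a (P₀ u) (P₀ u) + a (u - P₀ u) (u - P₀ u) := by
  have hw : a (u - P₀ u) u = a (u - P₀ u) (u - P₀ u) := by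
    calc a (u - P₀ u) u = a (u - P₀ u) (P₀ u + (u - P₀ u)) := by rw [add_sub_cancel]
      _ = a (u - P₀ u) (u - P₀ u) := by
        rw [add_right_of_add_left ha_add ha_symm, sub_proj_orthogonal ha_add horth u (hrange u),
          zero_add]
  rw [← hw, ← proj_self_left ha_symm hrange horth, ← ha_add, add_sub_cancel]

/-- `I - P₀` is a-symmetric. -/
theorem sub_proj_left_eq (ha_add : ∀ x y z, a (x + y) z = a x z + a y z)
    (ha_symm : ∀ x y, a x y = a y x) (hrange : ∀ u, P₀ u ∈ S)
    (horth : ∀ u, ∀ v ∈ S, a (P₀ u) v = a u v) (y u : V) :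
    a (y - P₀ y) u = a y (u - P₀ u) := by
  calc a (y - P₀ y) u = a (y - P₀ y) (P₀ u) + a (y - P₀ y) (u - P₀ u) := by
        rw [← add_right_of_add_left ha_add ha_symm, add_sub_cancel]
    _ = a y (u - P₀ u) - a (u - P₀ u) (P₀ y) := by
        rw [sub_proj_orthogonal ha_add horth y (hrange u), zero_add,
          sub_left_of_add_left ha_add, ha_symm (P₀ y)]
    _ = a y (u - P₀ u) := by
        rw [sub_proj_orthogonal ha_add horth u (hrange y), sub_zero]

theorem hybrid_energy (ha_add : ∀ x y z, a (x + y) z = a x z + a y z)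
    (ha_symm : ∀ x y, a x y = a y x) (hrange : ∀ u, P₀ u ∈ S)
    (horth : ∀ u, ∀ v ∈ S, a (P₀ u) v = a u v) (P : V → V) (u : V) :
    a (P₀ u + (P (u - P₀ u) - P₀ (P (u - P₀ u)))) u =
      a (P₀ u) (P₀ u) + a (P (u - P₀ u)) (u - P₀ u) := by
  rw [ha_add, proj_self_left ha_symm hrange horth, sub_proj_left_eq ha_add ha_symm hrange horth]

end

theorem stmt_16_general {V : Type*} [AddCommGroup V] [Module ℝ V]
    (a : V → V → ℝ)
    (ha_add : ∀ x y z, a (x + y) z = a x z + a y z)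
    (ha_symm : ∀ x y, a x y = a y x)
    (ha_pos : ∀ x, x ≠ 0 → 0 < a x x)
    (V₀ : Submodule ℝ V) (P₀ : V →ₗ[ℝ] V)
    (hrange : ∀ u, P₀ u ∈ V₀)
    (horth : ∀ u, ∀ v ∈ V₀, a (P₀ u) v = a u v)
    (P : V →ₗ[ℝ] V)
    (lam_min lam_max : ℝ) (h1 : lam_min ≤ 1) (h2 : 1 ≤ lam_max)
    (hlow : ∀ u, lam_min * a u u ≤ a (P u) u)
    (hhigh : ∀ u, a (P u) u ≤ lam_max * a u u) :
    ∀ u : V, lam_min * a u u ≤ a (P₀ u + (P (u - P₀ u) - P₀ (P (u - P₀ u)))) u ∧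
      a (P₀ u + (P (u - P₀ u) - P₀ (P (u - P₀ u)))) u ≤ lam_max * a u u := by
  intro u
  rw [hybrid_energy (S := V₀) ha_add ha_symm hrange horth,
    self_eq_proj_add_sub_proj (S := V₀) ha_add ha_symm hrange horth]
  have hproj_nonneg := self_nonneg_of_pos ha_add ha_pos (P₀ u)
  constructor
  · linarith [hlow (u - P₀ u), mul_le_of_le_one_left hproj_nonneg h1]
  · linarith [hhigh (u - P₀ u), le_mul_of_one_le_left hproj_nonneg h2]

theorem stmt_16 {V : Type*} [AddCommGroup V] [Module ℝ V] [FiniteDimensional ℝ V]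
    (a : V → V → ℝ)
    (ha_add : ∀ x y z, a (x + y) z = a x z + a y z)
    (ha_smul : ∀ (c : ℝ) (x y : V), a (c • x) y = c * a x y)
    (ha_symm : ∀ x y, a x y = a y x)
    (ha_pos : ∀ x, x ≠ 0 → 0 < a x x)
    (V₀ : Submodule ℝ V) (P₀ : V →ₗ[ℝ] V)
    (hrange : ∀ u, P₀ u ∈ V₀)
    (horth : ∀ u, ∀ v ∈ V₀, a (P₀ u) v = a u v)
    (P : V →ₗ[ℝ] V)
    (hsa : ∀ u v, a (P u) v = a u (P v))
    (lam_min lam_max : ℝ) (h1 : lam_min ≤ 1) (h2 : 1 ≤ lam_max) (hpos : 0 < lam_min)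
    (hlow : ∀ u, lam_min * a u u ≤ a (P u) u)
    (hhigh : ∀ u, a (P u) u ≤ lam_max * a u u) :
    ∀ u : V, lam_min * a u u ≤ a (P₀ u + (P (u - P₀ u) - P₀ (P (u - P₀ u)))) u ∧
      a (P₀ u + (P (u - P₀ u) - P₀ (P (u - P₀ u)))) u ≤ lam_max * a u u :=
  stmt_16_general a ha_add ha_symm ha_pos V₀ P₀ hrange horth P lam_min lam_max h1 h2 hlow hhigh
end
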